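/- Let Ω ⊆ ℝ³ be a nonempty open set, x₀ ∈ Ω, and let μ, D, Γ, D̃, Γ̃ be positive real constants. Let u, ũ : Ω → ℝ be twice differentiable with u(p) > 0 and ũ(p) > 0 for all p ∈ Ω. Suppose D Δu = μ u and D̃ Δũ = μ ũ at every point of Ω, Γ μ u = Γ̃ μ ũ at every point of Ω (same photoacoustic data and same absorption coefficient μ), and u(x₀) = ũ(x₀) (the fluence value at one point is known). Then u = ũ on Ω, D = D̃ and Γ = Γ̃. -/

import Mathlib

abbrev E3 := EuclideanSpace ℝ (Fin 3)

/-- The Laplacian: the sum of the second partial derivatives. -/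
noncomputable def lap (u : E3 → ℝ) (p : E3) : ℝ :=
  ∑ i : Fin 3, fderiv ℝ (fun q => fderiv ℝ u q (EuclideanSpace.single i 1)) p
    (EuclideanSpace.single i 1)

/-!
With `μ` known, the data `Γ μ u = Γ̃ μ ũ` at `x₀`, where `u(x₀) = ũ(x₀) > 0`, forces `Γ = Γ̃`,
and then `u = ũ` on all of `Ω`. The Laplacian is local, so `Δu(x₀) = Δũ(x₀)`, and this common
value is nonzero because `D Δu(x₀) = μ u(x₀) > 0`; comparing the two equations at `x₀` gives
`D = D̃`.
-/

open Filter Topology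

theorem Filter.EventuallyEq.lap_eq {u v : E3 → ℝ} {p : E3} (h : u =ᶠ[𝓝 p] v) :
    lap u p = lap v p := by
  refine Finset.sum_congr rfl fun i _ => ?_
  have hi : (fun q => fderiv ℝ u q (EuclideanSpace.single i 1)) =ᶠ[𝓝 p]
      fun q => fderiv ℝ v q (EuclideanSpace.single i 1) :=
    (h.fderiv (𝕜 := ℝ)).mono fun q hq => congrArg (· (EuclideanSpace.single i 1)) hq
  rw [hi.fderiv_eq]

theorem stmt9_general (Ω : Set E3) (hΩ : IsOpen Ω) (x₀ : E3) (hx₀ : x₀ ∈ Ω)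
    (mu D Γ Dt Γt : ℝ) (hmu : 0 < mu) (hΓ : 0 < Γ)
    (u ut : E3 → ℝ)
    (hpos : ∀ p ∈ Ω, 0 < u p)
    (heq : ∀ p ∈ Ω, D * lap u p = mu * u p)
    (heqt : ∀ p ∈ Ω, Dt * lap ut p = mu * ut p)
    (hdata : ∀ p ∈ Ω, Γ * mu * u p = Γt * mu * ut p)
    (hval : u x₀ = ut x₀) :
    (∀ p ∈ Ω, u p = ut p) ∧ D = Dt ∧ Γ = Γt := by
  have hu₀ : 0 < u x₀ := hpos x₀ hx₀
  have hΓeq : Γ = Γt := by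
    have h := hdata x₀ hx₀
    rw [← hval] at h
    exact mul_right_cancel₀ hmu.ne' (mul_right_cancel₀ hu₀.ne' h)
  have hue : ∀ p ∈ Ω, u p = ut p := fun p hp =>
    mul_left_cancel₀ (by positivity : Γ * mu ≠ 0) (hΓeq ▸ hdata p hp)
  have hlap : lap u x₀ = lap ut x₀ := (eventuallyEq_of_mem (hΩ.mem_nhds hx₀) hue).lap_eq
  have hDlap : D * lap u x₀ ≠ 0 := by rw [heq x₀ hx₀]; positivity
  have hcmp : D * lap u x₀ = Dt * lap u x₀ := by rw [heq x₀ hx₀, hlap, heqt x₀ hx₀, hval]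
  exact ⟨hue, mul_right_cancel₀ (right_ne_zero_of_mul hDlap) hcmp, hΓeq⟩

/-- Proposition 3.3, fluence known at one point and `μ` known: if two twice
differentiable positive fluences `u, ũ` on a nonempty open `Ω` satisfy `D Δu = μ u`,
`D̃ Δũ = μ ũ`, produce the same data `Γμu = Γ̃μũ`, and agree at one point `x₀`, then
`u = ũ`, `D = D̃` and `Γ = Γ̃`. -/
theorem stmt9 (Ω : Set E3) (hΩ : IsOpen Ω) (hne : Ω.Nonempty) (x₀ : E3) (hx₀ : x₀ ∈ Ω)
    (mu D Γ Dt Γt : ℝ) (hmu : 0 < mu) (hD : 0 < D) (hΓ : 0 < Γ) (hDt : 0 < Dt) (hΓt : 0 < Γt)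
    (u ut : E3 → ℝ)
    (hdiff : ∀ p ∈ Ω, DifferentiableAt ℝ u p ∧ DifferentiableAt ℝ (fderiv ℝ u) p)
    (hdifft : ∀ p ∈ Ω, DifferentiableAt ℝ ut p ∧ DifferentiableAt ℝ (fderiv ℝ ut) p)
    (hpos : ∀ p ∈ Ω, 0 < u p) (hposT : ∀ p ∈ Ω, 0 < ut p)
    (heq : ∀ p ∈ Ω, D * lap u p = mu * u p)
    (heqt : ∀ p ∈ Ω, Dt * lap ut p = mu * ut p)
    (hdata : ∀ p ∈ Ω, Γ * mu * u p = Γt * mu * ut p)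
    (hval : u x₀ = ut x₀) :
    (∀ p ∈ Ω, u p = ut p) ∧ D = Dt ∧ Γ = Γt :=
  stmt9_general Ω hΩ x₀ hx₀ mu D Γ Dt Γt hmu hΓ u ut hpos heq heqt hdata hval
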